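/- Every simple game on a finite player set has finite dimension, i.e., it can be written as the intersection of finitely many weighted games. -/

import Mathlib

def IsSimpleGame {N : Type*} [Fintype N] (v : Finset N → Prop) : Prop :=
  (∀ S T : Finset N, S ⊆ T → v S → v T) ∧ ¬ v ∅ ∧ v Finset.univ

def IsWeighted {N : Type*} [Fintype N] (v : Finset N → Prop) : Prop :=
  ∃ (w : N → ℝ) (q : ℝ), 0 < q ∧ (∀ i, 0 ≤ w i) ∧ ∀ S : Finset N, v S ↔ q ≤ ∑ i ∈ S, w i

def IsMaxLosing {N : Type*} [Fintype N] (v : Finset N → Prop) (T : Finset N) : Prop :=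
  ¬ v T ∧ ∀ T' : Finset N, T ⊂ T' → v T'

def IsMinWinning {N : Type*} [Fintype N] (v : Finset N → Prop) (S : Finset N) : Prop :=
  v S ∧ ∀ S' : Finset N, S' ⊂ S → ¬ v S'

/-!
A coalition is losing exactly when it lies inside some maximal losing coalition, so by
monotonicity `v` is the intersection, over the finitely many maximal losing coalitions `T`,
of the games "`S ⊄ T`". Each of these is weighted: give weight `1` to the players outside
`T`, weight `0` to those in `T`, and take quota `1`.
-/

lemma isWeighted_not_subset {N : Type*} [Fintype N] [DecidableEq N] (T : Finset N) :
    IsWeighted (fun S : Finset N => ¬ S ⊆ T) := by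
  refine ⟨fun i => if i ∉ T then 1 else 0, 1, one_pos, fun i => by positivity, fun S => ?_⟩
  rw [Finset.sum_boole, Nat.one_le_cast, Nat.one_le_iff_ne_zero, Ne, Finset.card_eq_zero,
    ← Ne, ← Finset.nonempty_iff_ne_empty, Finset.filter_nonempty_iff]
  exact Finset.not_subset

lemma isMaxLosing_iff_maximal {N : Type*} [Fintype N] (v : Finset N → Prop) (T : Finset N) :
    IsMaxLosing v T ↔ Maximal (fun S => ¬ v S) T := by
  simp only [IsMaxLosing, maximal_iff_forall_gt, not_not]

lemma exists_maxLosing_superset {N : Type*} [Fintype N] {v : Finset N → Prop} {S : Finset N}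
    (hS : ¬ v S) : ∃ T, S ⊆ T ∧ IsMaxLosing v T := by
  simpa only [isMaxLosing_iff_maximal] using Finite.exists_le_maximal (p := fun S => ¬ v S) hS

lemma iff_forall_maxLosing_not_subset {N : Type*} [Fintype N] {v : Finset N → Prop}
    (hmono : ∀ S T : Finset N, S ⊆ T → v S → v T) (S : Finset N) :
    v S ↔ ∀ T, IsMaxLosing v T → ¬ S ⊆ T := by
  refine ⟨fun hvS T hT hST => hT.1 (hmono S T hST hvS), fun h => ?_⟩
  by_contra hvS
  obtain ⟨T, hST, hT⟩ := exists_maxLosing_superset hvS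
  exact h T hT hST

/-- Every simple game on a finite player set has finite dimension: it is the
intersection of finitely many weighted games. -/
theorem finite_dimension {N : Type*} [Fintype N] [DecidableEq N]
    (v : Finset N → Prop) (hv : IsSimpleGame v) :
    ∃ (k : ℕ) (u : Fin k → (Finset N → Prop)),
      (∀ l, IsWeighted (u l)) ∧ ∀ S : Finset N, v S ↔ ∀ l, u l S := by
  classical
  let maxLosing : Finset (Finset N) := Finset.univ.filter (IsMaxLosing v)
  let T : Fin maxLosing.card → Finset N := fun l => maxLosing.equivFin.symm l
  refine ⟨maxLosing.card, fun l S => ¬ S ⊆ T l, fun l => isWeighted_not_subset (T l), fun S => ?_⟩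
  rw [iff_forall_maxLosing_not_subset hv.1 S]
  constructor
  · intro h l
    exact h (T l) (Finset.mem_filter.mp (maxLosing.equivFin.symm l).2).2
  · intro h T' hT'
    simpa only [T, Equiv.symm_apply_apply] using h (maxLosing.equivFin ⟨T', Finset.mem_filter.mpr ⟨Finset.mem_univ _, hT'⟩⟩)
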